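/- The k-th component of the isotonic least squares projection of Z equals the left-hand slope C(k) - C(k-1) of the greatest convex minorant C of the cumulative sum diagram of Z on [0,n]. -/

import Mathlib

open MeasureTheory ProbabilityTheory

noncomputable section

/-- The monotone cone of non-decreasing sequences in `ℝⁿ`. -/
def Mcone (n : ℕ) : Set (Fin n → ℝ) := {θ | Monotone θ}

/-- `θ` is the isotonic least squares projection of `Z` onto the monotone cone. -/
def IsIsoProj (n : ℕ) (Z θ : Fin n → ℝ) : Prop :=
  θ ∈ Mcone n ∧ ∀ η ∈ Mcone n, ∑ i, (Z i - θ i) ^ 2 ≤ ∑ i, (Z i - η i) ^ 2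

/-- Partial sums `S_j = Z_1 + ... + Z_j`, with `S_0 = 0`. -/
def psum (n : ℕ) (Z : Fin n → ℝ) (j : ℕ) : ℝ :=
  ∑ i ∈ Finset.range j, if h : i < n then Z ⟨i, h⟩ else 0

/-- Left-hand slope of the greatest convex minorant of the cumulative sum diagram:
`Δ_k = min_{k ≤ v ≤ n} max_{0 ≤ u < k} (S_v - S_u)/(v - u)`. -/
def gcmSlope (n : ℕ) (Z : Fin n → ℝ) (k : ℕ) (hk : 1 ≤ k) (hkn : k ≤ n) : ℝ :=
  (Finset.Icc k n).inf' (Finset.nonempty_Icc.mpr hkn) fun v =>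
    (Finset.range k).sup' (Finset.nonempty_range_iff.mpr (by omega)) fun u =>
      (psum n Z v - psum n Z u) / ((v : ℝ) - (u : ℝ))

/-- Running averages `Z̄_j = (Z_1 + ... + Z_j)/j`, indexed by `j : Fin n` (`j`-th is over `j+1` terms). -/
def runAvg (n : ℕ) (Z : Fin n → ℝ) (j : Fin n) : ℝ :=
  psum n Z ((j : ℕ) + 1) / ((j : ℕ) + 1)

/-- The `k`-th order statistic of the running averages. -/
def avgOrderStat (n : ℕ) (Z : Fin n → ℝ) (k : Fin n) : ℝ :=
  runAvg n Z (Tuple.sort (runAvg n Z) k)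

/-- Exchangeability of a random vector. -/
def Exchangeable {Ω : Type*} [MeasurableSpace Ω] (P : Measure Ω) (n : ℕ)
    (Z : Ω → Fin n → ℝ) : Prop :=
  ∀ σ : Equiv.Perm (Fin n),
    Measure.map (fun ω => Z ω ∘ σ) P = Measure.map Z P


/-- The cumulative sum diagram: equals `S_j` at integers `j`, linear in between. -/
def csd (n : ℕ) (Z : Fin n → ℝ) (t : ℝ) : ℝ :=
  psum n Z ⌊t⌋₊ + (t - (⌊t⌋₊ : ℝ)) * (psum n Z (⌊t⌋₊ + 1) - psum n Z ⌊t⌋₊)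

/-!
Write `φ k = C (k + 1) - C k` for the slopes of the minorant and `T j = S j - C j ≥ 0` for its gap
below the diagram. The slopes are nondecreasing by convexity, `T` vanishes at `0` and `n` (an affine
minorant of `S` through an endpoint is a convex minorant), and `φ` cannot increase at a vertex `j`
with `T j > 0`: otherwise an affine function with slope strictly between `φ (j - 1)` and `φ j`,
lifted slightly above `C j`, would be a convex minorant exceeding `C` at `j`. Since
`Z k - φ k = T (k + 1) - T k`, summation by parts turns `⟨Z - φ, η - φ⟩` into
`-∑ j, T j * (η j - η (j - 1)) ≤ 0` for every nondecreasing `η`. This obtuse-angle condition makes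
`φ` the nearest nondecreasing vector to `Z`, so `θ = φ`.
-/

open Finset

theorem sum_range_sub_mul_eq_neg_sum_mul_sub {R : Type*} [CommRing R] (T x : ℕ → R) {n : ℕ}
    (h0 : T 0 = 0) (hn : T n = 0) :
    ∑ i ∈ range n, (T (i + 1) - T i) * x i = -∑ i ∈ range n, T (i + 1) * (x (i + 1) - x i) := by
  have h := sum_range_sub (fun i => T i * x i) n
  simp only [h0, hn, zero_mul, sub_zero] at h
  rw [eq_neg_iff_add_eq_zero, ← sum_add_distrib, ← h]
  exact sum_congr rfl fun i _ => by ring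

theorem eq_of_sum_mul_sub_nonpos_of_sum_sq_le {ι : Type*} [Fintype ι] {z θ φ : ι → ℝ}
    (hangle : ∑ i, (z i - φ i) * (θ i - φ i) ≤ 0)
    (hle : ∑ i, (z i - θ i) ^ 2 ≤ ∑ i, (z i - φ i) ^ 2) : θ = φ := by
  have hsq : ∑ i, (θ i - φ i) ^ 2 ≤ 0 := by
    have hexpand : ∑ i, (z i - θ i) ^ 2
        = ∑ i, (z i - φ i) ^ 2 - 2 * ∑ i, (z i - φ i) * (θ i - φ i) + ∑ i, (θ i - φ i) ^ 2 := by
      rw [mul_sum, ← sum_sub_distrib, ← sum_add_distrib]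
      exact sum_congr rfl fun i _ => by ring
    linarith
  have hzero := (sum_eq_zero_iff_of_nonneg fun i _ => sq_nonneg (θ i - φ i)).mp
    (le_antisymm hsq (sum_nonneg fun i _ => sq_nonneg _))
  funext i
  simpa [sub_eq_zero] using hzero i (mem_univ i)

theorem slope_add_one {𝕜 : Type*} [Field 𝕜] (f : 𝕜 → 𝕜) (a : 𝕜) :
    slope f a (a + 1) = f (a + 1) - f a := by
  simp [slope_def_field]

section Convex

variable {𝕜 : Type*} [Field 𝕜] [LinearOrder 𝕜] [IsStrictOrderedRing 𝕜] {s : Set 𝕜} {f : 𝕜 → 𝕜}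
  {a b x : 𝕜}

theorem ConvexOn.secant_le_of_le_left (hf : ConvexOn 𝕜 s f) (ha : a ∈ s) (hb : b ∈ s)
    (hx : x ∈ s) (hab : a < b) (hxa : x ≤ a) : f b + slope f a b * (x - b) ≤ f x := by
  have h := hf.slope_mono hb ⟨hx, (hxa.trans_lt hab).ne⟩ ⟨ha, hab.ne⟩ hxa
  rw [slope_comm f b a] at h
  have hx' := sub_smul_slope f b x
  simp only [smul_eq_mul, vsub_eq_sub] at hx'
  nlinarith [mul_le_mul_of_nonpos_left h (sub_nonpos.mpr (hxa.trans hab.le))]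

theorem ConvexOn.secant_le_of_right_le (hf : ConvexOn 𝕜 s f) (ha : a ∈ s) (hb : b ∈ s)
    (hx : x ∈ s) (hab : a < b) (hbx : b ≤ x) : f a + slope f a b * (x - a) ≤ f x := by
  have h := hf.slope_mono ha ⟨hb, hab.ne'⟩ ⟨hx, (hab.trans_le hbx).ne'⟩ hbx
  have hx' := sub_smul_slope f a x
  simp only [smul_eq_mul, vsub_eq_sub] at hx'
  nlinarith [mul_le_mul_of_nonneg_left h (sub_nonneg.mpr (hab.le.trans hbx))]

theorem ConvexOn.slope_le_slope_add_one (hf : ConvexOn 𝕜 s f) (ha : a ∈ s) (ha' : a + 1 ∈ s)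
    (hb : b ∈ s) (hb' : b + 1 ∈ s) (hab : a ≤ b) : slope f a (a + 1) ≤ slope f b (b + 1) :=
  calc slope f a (a + 1) ≤ slope f a (b + 1) :=
        hf.slope_mono ha ⟨ha', by simp⟩ ⟨hb', by intro h; simp at h; linarith⟩ (by linarith)
    _ = slope f (b + 1) a := slope_comm f _ _
    _ ≤ slope f (b + 1) b :=
        hf.slope_mono hb' ⟨ha, by intro h; simp at h; linarith⟩ ⟨hb, by simp⟩ hab
    _ = slope f b (b + 1) := slope_comm f _ _

end Convex

structure IsGreatestConvexMinorant (s : Set ℝ) (f C : ℝ → ℝ) : Prop where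
  convexOn : ConvexOn ℝ s C
  le : ∀ t ∈ s, C t ≤ f t
  le_of_convexOn : ∀ D : ℝ → ℝ, ConvexOn ℝ s D → (∀ t ∈ s, D t ≤ f t) → ∀ t ∈ s, D t ≤ C t

theorem IsGreatestConvexMinorant.affine_le {s : Set ℝ} {f C : ℝ → ℝ}
    (hC : IsGreatestConvexMinorant s f C) (c m : ℝ) (hg : ∀ t ∈ s, c + m * t ≤ f t) :
    ∀ t ∈ s, c + m * t ≤ C t := by
  refine hC.le_of_convexOn _ ⟨hC.convexOn.1, fun x _ y _ a b _ _ hab => le_of_eq ?_⟩ hg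
  simp only [smul_eq_mul]
  linear_combination (-c) * hab

section CumulativeSumDiagram

variable {n : ℕ} {Z : Fin n → ℝ}

theorem psum_zero : psum n Z 0 = 0 := by simp [psum]

theorem psum_succ_sub (i : Fin n) : psum n Z (i + 1) - psum n Z i = Z i := by
  simp [psum, sum_range_succ]

theorem natCast_mem_Icc {j : ℕ} (hj : j ≤ n) : (j : ℝ) ∈ Set.Icc (0 : ℝ) n :=
  ⟨j.cast_nonneg, Nat.cast_le.mpr hj⟩

theorem exists_abs_psum_le : ∃ M, ∀ j ≤ n, |psum n Z j| ≤ M :=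
  ⟨∑ j ∈ range (n + 1), |psum n Z j|, fun _ hj =>
    single_le_sum (f := fun j => |psum n Z j|) (fun _ _ => abs_nonneg _)
      (mem_range.mpr (Nat.lt_succ_of_le hj))⟩

theorem csd_natCast (j : ℕ) : csd n Z j = psum n Z j := by simp [csd]

theorem affine_le_csd {c m : ℝ} (hg : ∀ j ≤ n, c + m * j ≤ psum n Z j) :
    ∀ t ∈ Set.Icc (0 : ℝ) n, c + m * t ≤ csd n Z t := by
  rintro t ⟨ht0, htn⟩
  set j := ⌊t⌋₊
  set w := t - j
  have hw0 : 0 ≤ w := sub_nonneg.mpr (Nat.floor_le ht0)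
  have hw1 : w < 1 := by have := Nat.lt_floor_add_one t; simp only [w]; linarith
  have hjn : j ≤ n := Nat.floor_le_of_le htn
  have hcsd : csd n Z t = psum n Z j + w * (psum n Z (j + 1) - psum n Z j) := rfl
  have ht : t = j + w := by simp only [w]; ring
  rcases hjn.lt_or_eq with hjn | rfl
  · have h0 := hg j hjn.le
    have h1 := hg (j + 1) hjn
    push_cast at h1
    rw [hcsd, ht]
    nlinarith
  · have hw : w = 0 := by simp only [w] at hw0 ⊢; linarith
    rw [hcsd, ht, hw]
    simpa using hg j le_rfl

end CumulativeSumDiagram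

namespace IsGreatestConvexMinorant

variable {n : ℕ} {Z : Fin n → ℝ} {C : ℝ → ℝ}
  (hC : IsGreatestConvexMinorant (Set.Icc 0 n) (csd n Z) C)
include hC

theorem le_psum {j : ℕ} (hj : j ≤ n) : C j ≤ psum n Z j := by
  simpa [csd_natCast] using hC.le j (natCast_mem_Icc hj)

theorem affine_le_of_le_psum {c m : ℝ} (hg : ∀ j ≤ n, c + m * j ≤ psum n Z j) {j : ℕ}
    (hj : j ≤ n) : c + m * j ≤ C j :=
  hC.affine_le c m (affine_le_csd hg) j (natCast_mem_Icc hj)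

theorem apply_zero : C 0 = 0 := by
  obtain ⟨M, hM⟩ := exists_abs_psum_le (Z := Z)
  have hM0 : 0 ≤ M := by simpa [psum_zero] using hM 0 (Nat.zero_le n)
  have hg : ∀ j ≤ n, 0 + -M * j ≤ psum n Z j := by
    intro j hj
    rcases j.eq_zero_or_pos with rfl | hj1
    · simp [psum_zero]
    · have : (1 : ℝ) ≤ j := by exact_mod_cast hj1
      nlinarith [neg_abs_le (psum n Z j), hM j hj]
  have hge := hC.affine_le_of_le_psum hg (Nat.zero_le n)
  have hle := hC.le_psum (Nat.zero_le n)
  simp only [Nat.cast_zero, mul_zero, add_zero, psum_zero] at hge hle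
  linarith

theorem apply_natCast_self : C n = psum n Z n := by
  obtain ⟨M, hM⟩ := exists_abs_psum_le (Z := Z)
  have hM0 : 0 ≤ M := by simpa [psum_zero] using hM 0 (Nat.zero_le n)
  have hg : ∀ j ≤ n, (psum n Z n - 2 * M * n) + 2 * M * j ≤ psum n Z j := by
    intro j hj
    rcases hj.lt_or_eq with hj | rfl
    · have : (j : ℝ) + 1 ≤ n := by exact_mod_cast hj
      nlinarith [le_abs_self (psum n Z n), neg_abs_le (psum n Z j), hM j hj.le, hM n le_rfl]
    · linarith
  have := hC.affine_le_of_le_psum hg le_rfl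
  linarith [hC.le_psum le_rfl]

theorem slopes_monotone : Monotone fun i : Fin n => C (i + 1) - C i := by
  intro i j hij
  simpa only [slope_add_one] using hC.convexOn.slope_le_slope_add_one
    (natCast_mem_Icc i.isLt.le) (by exact_mod_cast natCast_mem_Icc i.isLt)
    (natCast_mem_Icc j.isLt.le) (by exact_mod_cast natCast_mem_Icc j.isLt) (Nat.cast_le.mpr hij)

theorem slope_succ_eq_of_lt_psum {i : ℕ} (hi : i + 1 < n)
    (hlt : C ↑(i + 1) < psum n Z (i + 1)) :
    C (↑(i + 1) + 1) - C ↑(i + 1) = C (↑i + 1) - C ↑i := by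
  refine le_antisymm ?_
    (hC.slopes_monotone (Fin.mk_le_mk.mpr i.le_succ : (⟨i, by omega⟩ : Fin n) ≤ ⟨i + 1, hi⟩))
  by_contra! hkink
  push_cast at hlt hkink ⊢
  set a := C (↑i + 1) - C ↑i with ha
  set b := C (↑i + 1 + 1) - C (↑i + 1) with hb
  set ε := min (psum n Z (i + 1) - C (↑i + 1)) ((b - a) / 2)
  have hε : 0 < ε := lt_min (by linarith) (by linarith)
  have hε₁ : ε ≤ psum n Z (i + 1) - C (↑i + 1) := min_le_left _ _
  have hε₂ : ε ≤ (b - a) / 2 := min_le_right _ _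
  set σ := (a + b) / 2 with hσ
  have hg : ∀ j ≤ n, (C (↑i + 1) + ε - σ * (↑i + 1)) + σ * j ≤ psum n Z j := by
    intro j hj
    rcases lt_trichotomy j (i + 1) with hji | rfl | hji
    · have hsec := hC.convexOn.secant_le_of_le_left (natCast_mem_Icc (j := i) (by omega))
        (by exact_mod_cast natCast_mem_Icc (j := i + 1) (by omega)) (natCast_mem_Icc hj)
        (lt_add_one (i : ℝ)) (by exact_mod_cast Nat.lt_succ_iff.mp hji)
      rw [slope_add_one, ← ha] at hsec
      have : (j : ℝ) + 1 ≤ i + 1 := by exact_mod_cast hji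
      linarith [hC.le_psum hj, mul_nonneg (by linarith : (0 : ℝ) ≤ σ - a - ε)
        (by linarith : (0 : ℝ) ≤ i + 1 - j), mul_nonneg hε.le (by linarith : (0 : ℝ) ≤ i - j)]
    · push_cast; linarith
    · have hsec := hC.convexOn.secant_le_of_right_le
        (by exact_mod_cast natCast_mem_Icc (j := i + 1) (by omega))
        (by exact_mod_cast natCast_mem_Icc (j := i + 2) (by omega)) (natCast_mem_Icc hj)
        (lt_add_one ((i : ℝ) + 1)) (by exact_mod_cast hji)
      rw [slope_add_one, ← hb] at hsec
      have : (i : ℝ) + 1 + 1 ≤ j := by exact_mod_cast hji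
      linarith [hC.le_psum hj, mul_nonneg (by linarith : (0 : ℝ) ≤ b - σ - ε)
        (by linarith : (0 : ℝ) ≤ j - (i + 1)),
        mul_nonneg hε.le (by linarith : (0 : ℝ) ≤ j - (i + 2))]
  have := hC.affine_le_of_le_psum hg hi.le
  push_cast at this
  linarith

theorem sum_mul_sub_slopes_nonpos {η : Fin n → ℝ} (hη : Monotone η) :
    ∑ i : Fin n, (Z i - (C (i + 1) - C i)) * (η i - (C (i + 1) - C i)) ≤ 0 := by
  set φ : ℕ → ℝ := fun j => C (j + 1) - C j
  set T : ℕ → ℝ := fun j => psum n Z j - C j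
  set ηe : ℕ → ℝ := fun j => if h : j < n then η ⟨j, h⟩ else 0
  set x : ℕ → ℝ := fun j => ηe j - φ j
  have hsum : ∑ i : Fin n, (Z i - (C (i + 1) - C i)) * (η i - (C (i + 1) - C i))
      = ∑ j ∈ range n, (T (j + 1) - T j) * x j := by
    rw [← Fin.sum_univ_eq_sum_range (fun j => (T (j + 1) - T j) * x j)]
    refine sum_congr rfl fun i _ => ?_
    rw [← psum_succ_sub (Z := Z) i]
    simp only [T, x, ηe, φ, dif_pos i.isLt, Nat.cast_add, Nat.cast_one]
    ring
  have hT0 : T 0 = 0 := by simp [T, psum_zero, hC.apply_zero]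
  have hTn : T n = 0 := by simp [T, hC.apply_natCast_self]
  rw [hsum, sum_range_sub_mul_eq_neg_sum_mul_sub T x hT0 hTn, neg_nonpos]
  refine sum_nonneg fun i hi => ?_
  have hi : i + 1 < n ∨ i + 1 = n := by have := mem_range.mp hi; omega
  rcases hi with hi | hi
  · have hT : 0 ≤ T (i + 1) := sub_nonneg.mpr (hC.le_psum hi.le)
    have hslack : T (i + 1) * (φ (i + 1) - φ i) = 0 := by
      rcases (hC.le_psum hi.le).lt_or_eq with hlt | heq
      · simp only [φ, hC.slope_succ_eq_of_lt_psum hi hlt, sub_self, mul_zero]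
      · show (psum n Z (i + 1) - C ↑(i + 1)) * _ = 0
        rw [heq, sub_self, zero_mul]
    have hstep : ηe i ≤ ηe (i + 1) := by
      simp only [ηe, dif_pos (Nat.lt_of_succ_lt hi), dif_pos hi]
      exact hη (Fin.mk_le_mk.mpr i.le_succ)
    have : T (i + 1) * (x (i + 1) - x i)
        = T (i + 1) * (ηe (i + 1) - ηe i) - T (i + 1) * (φ (i + 1) - φ i) := by
      simp only [x]; ring
    rw [this, hslack, sub_zero]
    exact mul_nonneg hT (sub_nonneg.mpr hstep)
  · rw [hi, hTn, zero_mul]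

end IsGreatestConvexMinorant

/-- the components of the isotonic projection are the left-hand
slopes of the greatest convex minorant of the cumulative sum diagram. -/
theorem isoProj_eq_gcm_slopes (n : ℕ) (Z θ : Fin n → ℝ) (hθ : IsIsoProj n Z θ)
    (C : ℝ → ℝ)
    (hCconv : ConvexOn ℝ (Set.Icc (0 : ℝ) n) C)
    (hCle : ∀ t ∈ Set.Icc (0 : ℝ) n, C t ≤ csd n Z t)
    (hCgreatest : ∀ D : ℝ → ℝ, ConvexOn ℝ (Set.Icc (0 : ℝ) n) D →
      (∀ t ∈ Set.Icc (0 : ℝ) n, D t ≤ csd n Z t) →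
      ∀ t ∈ Set.Icc (0 : ℝ) n, D t ≤ C t)
    (k : Fin n) :
    θ k = C ((k : ℝ) + 1) - C (k : ℝ) := by
  have hC : IsGreatestConvexMinorant (Set.Icc 0 n) (csd n Z) C := ⟨hCconv, hCle, hCgreatest⟩
  have hθφ : θ = fun i : Fin n => C ((i : ℝ) + 1) - C i :=
    eq_of_sum_mul_sub_nonpos_of_sum_sq_le (hC.sum_mul_sub_slopes_nonpos hθ.1)
      (hθ.2 _ hC.slopes_monotone)
  exact congrFun hθφ k
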